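/- Let A be a bounded linear operator on H and t ∈ [0,1]. For the block operator T = (0 A; 0 0) on H ⊕ H one has ‖T‖_{t-ber} ≤ max{t, 1−t}·‖A‖_ber, where the t-Berezin norm of T is taken with respect to the family of unit vectors of H ⊕ H of the form (c₁ k_{λ₁}, c₂ k_{λ₂}) with λ₁, λ₂ ∈ Ω and |c₁|² + |c₂|² = 1. -/
import Mathlib


open ContinuousLinearMap
open scoped InnerProductSpace

/-- The `t`-Berezin norm of `A` with respect to the family `k` of (normalized reproducing
kernel) vectors. -/
noncomputable def tber {E : Type*} [NormedAddCommGroup E] [InnerProductSpace ℂ E]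
    [CompleteSpace E] {ι : Type*} (k : ι → E) (t : ℝ) (A : E →L[ℂ] E) : ℝ :=
  ⨆ p : ι × ι, (t * ‖⟪A (k p.1), k p.2⟫_ℂ‖ + (1 - t) * ‖⟪adjoint A (k p.1), k p.2⟫_ℂ‖)

/-- The Berezin norm of `A` with respect to the family `k`. -/
noncomputable def berNorm {E : Type*} [NormedAddCommGroup E] [InnerProductSpace ℂ E]
    {ι : Type*} (k : ι → E) (A : E →L[ℂ] E) : ℝ :=
  ⨆ p : ι × ι, ‖⟪A (k p.1), k p.2⟫_ℂ‖

/-- The Berezin number of `A` with respect to the family `k`. -/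
noncomputable def berNum {E : Type*} [NormedAddCommGroup E] [InnerProductSpace ℂ E]
    {ι : Type*} (k : ι → E) (A : E →L[ℂ] E) : ℝ :=
  ⨆ l : ι, ‖⟪A (k l), k l⟫_ℂ‖

/-- The modulus `|A| = (A*A)^(1/2)` of an operator, via the continuous functional calculus. -/
noncomputable def absOp {H : Type*} [NormedAddCommGroup H] [InnerProductSpace ℂ H]
    [CompleteSpace H] (A : H →L[ℂ] H) : H →L[ℂ] H :=
  cfc Real.sqrt (adjoint A * A)

/-- Real powers of a (positive) operator via the continuous functional calculus. -/
noncomputable def rpowOp {H : Type*} [NormedAddCommGroup H] [InnerProductSpace ℂ H]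
    [CompleteSpace H] (A : H →L[ℂ] H) (r : ℝ) : H →L[ℂ] H :=
  cfc (fun x : ℝ => x ^ r) A

/-- The family of unit vectors `(c₁ k_{λ₁}, c₂ k_{λ₂})` of `H ⊕ H` (realized as `WithLp 2 (H × H)`)
indexed by pairs of kernel indices and pairs of scalars with `|c₁|² + |c₂|² = 1`. -/
noncomputable def K2 {H : Type*} [NormedAddCommGroup H] [InnerProductSpace ℂ H]
    {Ω : Type*} (k : Ω → H) :
    {q : (Ω × Ω) × ℂ × ℂ // ‖q.2.1‖ ^ 2 + ‖q.2.2‖ ^ 2 = 1} → WithLp 2 (H × H) :=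
  fun q => (WithLp.equiv 2 (H × H)).symm (q.1.2.1 • k q.1.1.1, q.1.2.2 • k q.1.1.2)

theorem stmt9 {H : Type*} [NormedAddCommGroup H] [InnerProductSpace ℂ H] [CompleteSpace H]
    {Ω : Type*} [Nonempty Ω] (k : Ω → H) (hk : ∀ l, ‖k l‖ = 1)
    (t : ℝ) (ht : t ∈ Set.Icc (0 : ℝ) 1) (A : H →L[ℂ] H)
    (T : WithLp 2 (H × H) →L[ℂ] WithLp 2 (H × H))
    (hT : ∀ x y : H, T ((WithLp.equiv 2 (H × H)).symm (x, y)) =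
      (WithLp.equiv 2 (H × H)).symm (A y, 0)) :
    tber (K2 k) t T ≤ max t (1 - t) * berNorm k A := by

  obtain ⟨ht0, ht1⟩ := ht
  set M := berNorm k A with hM
  have hbdd : BddAbove (Set.range fun p : Ω × Ω => ‖⟪A (k p.1), k p.2⟫_ℂ‖) := by
    refine ⟨‖A‖, ?_⟩
    rintro _ ⟨p, rfl⟩
    calc ‖⟪A (k p.1), k p.2⟫_ℂ‖ ≤ ‖A (k p.1)‖ * ‖k p.2‖ := norm_inner_le_norm _ _
      _ ≤ ‖A‖ * ‖k p.1‖ * ‖k p.2‖ := by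
          gcongr; exact A.le_opNorm _
      _ = ‖A‖ := by rw [hk, hk]; ring
  have hMb : ∀ l m : Ω, ‖⟪A (k l), k m⟫_ℂ‖ ≤ M := by
    intro l m
    exact le_ciSup hbdd (l, m)
  have hM0 : 0 ≤ M := le_trans (norm_nonneg _) (hMb (Classical.arbitrary Ω) (Classical.arbitrary Ω))
  haveI : Nonempty {q : (Ω × Ω) × ℂ × ℂ // ‖q.2.1‖ ^ 2 + ‖q.2.2‖ ^ 2 = 1} :=
    ⟨⟨((Classical.arbitrary Ω, Classical.arbitrary Ω), 1, 0), by simp⟩⟩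
  apply ciSup_le
  rintro ⟨⟨⟨⟨l1, l2⟩, c1, c2⟩, hc⟩, ⟨⟨⟨m1, m2⟩, d1, d2⟩, hd⟩⟩
  simp only at hc hd ⊢
  have hTK : ∀ (l1 l2 : Ω) (c1 c2 : ℂ),
      T ((WithLp.equiv 2 (H × H)).symm (c1 • k l1, c2 • k l2)) =
      (WithLp.equiv 2 (H × H)).symm (c2 • A (k l2), 0) := by
    intro l1 l2 c1 c2
    rw [hT]
    simp [map_smul]
  have key1 : ⟪T (K2 k ⟨((l1, l2), c1, c2), hc⟩), K2 k ⟨((m1, m2), d1, d2), hd⟩⟫_ℂ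
      = (starRingEnd ℂ) c2 * d1 * ⟪A (k l2), k m1⟫_ℂ := by
    rw [K2, K2, hTK]
    rw [WithLp.prod_inner_apply]
    simp [inner_smul_left, inner_smul_right]
    ring
  have key2 : ⟪adjoint T (K2 k ⟨((l1, l2), c1, c2), hc⟩), K2 k ⟨((m1, m2), d1, d2), hd⟩⟫_ℂ
      = (starRingEnd ℂ) c1 * d2 * ⟪k l1, A (k m2)⟫_ℂ := by
    rw [adjoint_inner_left, K2, K2, hTK]
    rw [WithLp.prod_inner_apply]
    simp [inner_smul_left, inner_smul_right]
    ring
  rw [key1, key2]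
  have h1 : ‖(starRingEnd ℂ) c2 * d1 * ⟪A (k l2), k m1⟫_ℂ‖
      = ‖c2‖ * ‖d1‖ * ‖⟪A (k l2), k m1⟫_ℂ‖ := by
    simp [norm_mul]
  have h2 : ‖(starRingEnd ℂ) c1 * d2 * ⟪k l1, A (k m2)⟫_ℂ‖
      = ‖c1‖ * ‖d2‖ * ‖⟪A (k m2), k l1⟫_ℂ‖ := by
    rw [norm_mul, norm_mul, ← inner_conj_symm (A (k m2)) (k l1), RCLike.norm_conj,
      RCLike.norm_conj]
  rw [h1, h2]
  have e1 := hMb l2 m1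
  have e2 := hMb m2 l1
  have hcd : ‖c2‖ * ‖d1‖ + ‖c1‖ * ‖d2‖ ≤ 1 := by
    nlinarith [norm_nonneg c1, norm_nonneg c2, norm_nonneg d1, norm_nonneg d2,
      sq_nonneg (‖c2‖ - ‖d1‖), sq_nonneg (‖c1‖ - ‖d2‖)]
  have hmax1 : t ≤ max t (1 - t) := le_max_left _ _
  have hmax2 : 1 - t ≤ max t (1 - t) := le_max_right _ _
  calc t * (‖c2‖ * ‖d1‖ * ‖⟪A (k l2), k m1⟫_ℂ‖) + (1 - t) * (‖c1‖ * ‖d2‖ * ‖⟪A (k m2), k l1⟫_ℂ‖)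
      ≤ t * (‖c2‖ * ‖d1‖ * M) + (1 - t) * (‖c1‖ * ‖d2‖ * M) := by
        gcongr <;> first | positivity | linarith
    _ ≤ max t (1 - t) * (‖c2‖ * ‖d1‖ * M) + max t (1 - t) * (‖c1‖ * ‖d2‖ * M) := by
        gcongr <;> first | positivity | linarith
    _ = max t (1 - t) * ((‖c2‖ * ‖d1‖ + ‖c1‖ * ‖d2‖) * M) := by ring
    _ ≤ max t (1 - t) * (1 * M) := by
        have h0 : 0 ≤ max t (1 - t) := le_trans ht0 hmax1
        gcongr
    _ = max t (1 - t) * M := by ring
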